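/- Let p ≥ 4. For every n ≥ p − 1, the number of permutations σ ∈ S_n with no 1324⋯p-match and exactly one descent equals 2^n − 2n + p − 2. (In particular, for p = 4 and n ≥ 4 this number is 2^n − 2n + 2.) -/

import Mathlib

open scoped Classical

noncomputable section

/-- The number of descents of a permutation of `Fin n` (one-line notation). -/
def desNum {n : ℕ} (σ : Equiv.Perm (Fin n)) : ℕ :=
  (Finset.univ.filter fun i : Fin (n - 1) =>
    σ ⟨(i : ℕ) + 1, by have := i.isLt; omega⟩ < σ ⟨(i : ℕ), by have := i.isLt; omega⟩).card

/-- The number of left-to-right minima of a permutation of `Fin n`. -/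
def lrMin {n : ℕ} (σ : Equiv.Perm (Fin n)) : ℕ :=
  (Finset.univ.filter fun j : Fin n => ∀ i : Fin n, i < j → σ j < σ i).card

/-- `σ` has a (consecutive) `τ`-match: some window of `j` consecutive entries of `σ`
in one-line notation reduces to `τ`, i.e. is order-isomorphic to `τ`. -/
def HasMatch {j n : ℕ} (τ : Equiv.Perm (Fin j)) (σ : Equiv.Perm (Fin n)) : Prop :=
  ∃ (i : ℕ) (h : i + j ≤ n), ∀ a b : Fin j,
    (σ ⟨i + (a : ℕ), by have := a.isLt; omega⟩ < σ ⟨i + (b : ℕ), by have := b.isLt; omega⟩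
      ↔ τ a < τ b)

/-- The pattern `1 3 2 4 5 ⋯ p ∈ S_p`: in (0-indexed) one-line notation, the identity
with the values in positions 1 and 2 interchanged. -/
def tau132 (p : ℕ) (hp : 2 < p) : Equiv.Perm (Fin p) :=
  Equiv.swap ⟨1, by omega⟩ ⟨2, by omega⟩

/-! A permutation with exactly one descent, at position `d`, is determined by the set `A` of
its first `d + 1` values: it lists `A` increasingly and then the complement increasingly.
Conversely such a listing has exactly one descent unless `A` is an initial segment, so there are
`2 ^ n - (n + 1)` permutations with one descent.

A `1324⋯p`-match in a window starting at `i` forces the descent to sit at `i + 1` and moreover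
`σ i < σ (i + 2)` and `σ (i + 1) < σ (i + 3)`; with no other descent, `σ` composed with the
transposition of `i + 1, i + 2` is increasing, so `σ` is that adjacent transposition.
Conversely the transposition of `j, j + 1` has a match (at `j - 1`) iff `1 ≤ j ≤ n + 1 - p`,
and subtracting these `n + 1 - p` permutations gives the count. -/

open Finset Equiv

section

variable {n : ℕ}

lemma strictMono_of_lt_of_val_eq_succ {α : Type*} [Preorder α] {f : Fin n → α}
    (h : ∀ i j : Fin n, (j : ℕ) = i + 1 → f i < f j) : StrictMono f := by
  cases n with
  | zero => exact fun i => i.elim0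
  | succ m => exact Fin.strictMono_iff_lt_succ.mpr fun i => h _ _ rfl

def IsOnlyDescentAt (σ : Perm (Fin n)) (d : ℕ) : Prop :=
  d + 1 < n ∧ ∀ i j : Fin n, (j : ℕ) = i + 1 → (σ j < σ i ↔ (i : ℕ) = d)

lemma desNum_eq_one_iff {σ : Perm (Fin n)} : desNum σ = 1 ↔ ∃ d, IsOnlyDescentAt σ d := by
  rw [desNum, card_eq_one]
  constructor
  · rintro ⟨a, ha⟩
    refine ⟨a, by omega, fun ⟨i, hi⟩ ⟨j, hj⟩ hij => ?_⟩
    obtain rfl : j = i + 1 := hij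
    simpa [Fin.ext_iff] using Finset.ext_iff.mp ha ⟨i, by omega⟩
  · rintro ⟨d, hd, hdes⟩
    refine ⟨⟨d, by omega⟩, Finset.ext fun ⟨i, hi⟩ => ?_⟩
    simpa [Fin.ext_iff] using hdes ⟨i, by omega⟩ ⟨i + 1, by omega⟩ rfl

lemma IsOnlyDescentAt.apply_lt_apply {σ : Perm (Fin n)} {d : ℕ} (h : IsOnlyDescentAt σ d)
    {i j : Fin n} (hij : (j : ℕ) = i + 1) (hi : (i : ℕ) ≠ d) : σ i < σ j :=
  lt_of_le_of_ne (not_lt.mp fun hji => hi ((h.2 i j hij).mp hji))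
    (σ.injective.ne (Fin.ne_of_val_ne (by omega)))

lemma IsOnlyDescentAt.unique {σ : Perm (Fin n)} {d d' : ℕ} (h : IsOnlyDescentAt σ d)
    (h' : IsOnlyDescentAt σ d') : d = d' :=
  (h'.2 ⟨d, by have := h.1; omega⟩ ⟨d + 1, h.1⟩ rfl).mp ((h.2 _ _ rfl).mpr rfl)

lemma val_lt_card_iff_mem_of_isLowerSet {A : Finset (Fin n)} (hA : IsLowerSet (A : Set (Fin n)))
    (x : Fin n) : (x : ℕ) < #A ↔ x ∈ A := by
  simpa using Fin.lt_card_filter_univ_iff_apply_of_imp (j := x) (· ∈ A) fun _ _ h hi => hA h hi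

lemma card_isLowerSet : #{A : Finset (Fin n) | IsLowerSet (A : Set (Fin n))} = n + 1 := by
  rw [← card_range (n + 1)]
  refine card_bij (fun A _ => #A) (fun A _ => ?_) (fun A hA B hB h => ?_) (fun k hk => ?_)
  · simpa [Nat.lt_succ_iff] using card_le_univ A
  · simp only [mem_filter, mem_univ, true_and] at hA hB
    ext x
    rw [← val_lt_card_iff_mem_of_isLowerSet hA, ← val_lt_card_iff_mem_of_isLowerSet hB, h]
  · refine ⟨({x | (x : ℕ) < k} : Finset (Fin n)), ?_, ?_⟩
    · simp only [mem_filter, mem_univ, true_and]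
      intro a b hba ha
      simp only [coe_filter, mem_univ, true_and, Set.mem_ofPred_eq] at ha ⊢
      exact lt_of_le_of_lt hba ha
    · simp only [mem_range] at hk
      rw [Fin.card_filter_val_lt]
      omega

lemma card_not_isLowerSet :
    #{A : Finset (Fin n) | ¬ IsLowerSet (A : Set (Fin n))} + (n + 1) = 2 ^ n := by
  rw [← card_isLowerSet, add_comm, card_filter_add_card_filter_not, card_univ,
    Fintype.card_finset, Fintype.card_fin]

lemma card_pos_of_not_isLowerSet {A : Finset (Fin n)} (hA : ¬ IsLowerSet (A : Set (Fin n))) :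
    0 < #A :=
  card_pos.mpr <| nonempty_iff_ne_empty.mpr <| by
    rintro rfl
    exact hA (by simpa using isLowerSet_empty)

def sortKey (A : Finset (Fin n)) (x : Fin n) : ℕ := if x ∈ A then x else n + x

lemma sortKey_injective (A : Finset (Fin n)) : Function.Injective (sortKey A) := by
  intro x y h
  unfold sortKey at h
  split_ifs at h <;> omega

/-- `sortKey A` ranks all of `A` below all of `Aᶜ`, so sorting by it lists `A` increasingly and
then `Aᶜ` increasingly: the Grassmannian permutation with first block `A`. -/
def grassmannian (A : Finset (Fin n)) : Perm (Fin n) := Tuple.sort (sortKey A)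

lemma monotone_sortKey_comp_grassmannian (A : Finset (Fin n)) :
    Monotone (sortKey A ∘ grassmannian A) :=
  Tuple.monotone_sort _

variable {A : Finset (Fin n)}

lemma grassmannian_le_of_mem_iff {i j : Fin n} (hij : i ≤ j)
    (h : grassmannian A i ∈ A ↔ grassmannian A j ∈ A) : grassmannian A i ≤ grassmannian A j := by
  have := monotone_sortKey_comp_grassmannian A hij
  simp only [Function.comp_apply, sortKey] at this
  rw [Fin.le_iff_val_le_val]
  split_ifs at this <;> first | omega | tauto

lemma grassmannian_mem_of_le {i j : Fin n} (hji : j ≤ i) (hi : grassmannian A i ∈ A) :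
    grassmannian A j ∈ A := by
  by_contra hj
  have := monotone_sortKey_comp_grassmannian A hji
  simp only [Function.comp_apply, sortKey, if_pos hi, if_neg hj] at this
  omega

lemma grassmannian_mem_iff (i : Fin n) : grassmannian A i ∈ A ↔ (i : ℕ) < #A := by
  have hcard : #{i | grassmannian A i ∈ A} = #A := by
    rw [← card_map (grassmannian A).toEmbedding]
    congr 1
    ext x
    simp
  rw [← hcard]
  exact (Fin.lt_card_filter_univ_iff_apply_of_imp _ fun _ _ => grassmannian_mem_of_le).symm

lemma isOnlyDescentAt_grassmannian (hA : ¬ IsLowerSet (A : Set (Fin n))) :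
    IsOnlyDescentAt (grassmannian A) (#A - 1) := by
  set σ := grassmannian A
  obtain ⟨a, b, hba, ha, hb⟩ : ∃ a b, b ≤ a ∧ a ∈ A ∧ b ∉ A := by simpa [IsLowerSet] using hA
  have hba : b < a := lt_of_le_of_ne hba (by rintro rfl; exact hb ha)
  have hσa := (grassmannian_mem_iff (A := A) (σ.symm a)).mp (by simpa [σ] using ha)
  have hσb := (grassmannian_mem_iff (A := A) (σ.symm b)).not.mp (by simpa [σ] using hb)
  refine ⟨by omega, fun i j hij => ⟨fun hji => ?_, fun hi => ?_⟩⟩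
  · by_contra hi
    have hsame : σ i ∈ A ↔ σ j ∈ A := by
      rw [grassmannian_mem_iff, grassmannian_mem_iff]
      omega
    exact (grassmannian_le_of_mem_iff (Fin.le_iff_val_le_val.mpr (by omega)) hsame).not_gt hji
  · have hai : a ≤ σ i := by
      simpa [σ] using grassmannian_le_of_mem_iff (A := A) (i := σ.symm a) (j := i)
        (Fin.le_iff_val_le_val.mpr (by omega))
        (by simp [σ, ha, grassmannian_mem_iff]; omega)
    have hjb : σ j ≤ b := by
      simpa [σ] using grassmannian_le_of_mem_iff (A := A) (i := j) (j := σ.symm b)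
        (Fin.le_iff_val_le_val.mpr (by omega))
        (by simp [σ, hb, grassmannian_mem_iff]; omega)
    exact hjb.trans_lt (hba.trans_le hai)

lemma grassmannian_injOn :
    Set.InjOn grassmannian {A : Finset (Fin n) | ¬ IsLowerSet (A : Set (Fin n))} := by
  intro A hA B hB h
  have hcard : #A = #B := by
    have := (isOnlyDescentAt_grassmannian hA).unique (h ▸ isOnlyDescentAt_grassmannian hB)
    have := card_pos_of_not_isLowerSet hA
    have := card_pos_of_not_isLowerSet hB
    omega
  ext x
  have hxA := grassmannian_mem_iff (A := A) ((grassmannian A).symm x)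
  have hxB := grassmannian_mem_iff (A := B) ((grassmannian B).symm x)
  rw [apply_symm_apply] at hxA hxB
  rw [hxA, hxB, h, hcard]

lemma IsOnlyDescentAt.not_isLowerSet {σ : Perm (Fin n)} {d : ℕ} (h : IsOnlyDescentAt σ d) :
    ¬ IsLowerSet (({i | (i : ℕ) ≤ d} : Finset (Fin n)).map σ.toEmbedding : Set (Fin n)) := by
  intro hl
  have hdes := (h.2 ⟨d, by have := h.1; omega⟩ ⟨d + 1, h.1⟩ rfl).mpr rfl
  have := hl hdes.le (by simp)
  simp at this

lemma IsOnlyDescentAt.eq_grassmannian {σ : Perm (Fin n)} {d : ℕ} (h : IsOnlyDescentAt σ d) :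
    σ = grassmannian (({i | (i : ℕ) ≤ d} : Finset (Fin n)).map σ.toEmbedding) := by
  set A := ({i | (i : ℕ) ≤ d} : Finset (Fin n)).map σ.toEmbedding
  have hmem : ∀ i, σ i ∈ A ↔ (i : ℕ) ≤ d := by simp [A]
  refine Tuple.eq_sort_iff.mpr ⟨(strictMono_of_lt_of_val_eq_succ fun i j hij => ?_).monotone,
    fun i j hij heq => absurd (σ.injective (sortKey_injective A heq)) hij.ne⟩
  have hdes := h.2 i j hij
  have hne : (σ i : ℕ) ≠ σ j := fun he => by
    have := σ.injective (Fin.ext he)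
    omega
  simp only [Function.comp_apply, sortKey, hmem, Fin.lt_def] at hdes ⊢
  split_ifs <;> omega

lemma card_desNum_eq_one : #{σ : Perm (Fin n) | desNum σ = 1} + (n + 1) = 2 ^ n := by
  rw [← card_not_isLowerSet]
  congr 1
  refine (card_bij (fun A _ => grassmannian A) (fun A hA => ?_)
    (fun A hA B hB h => grassmannian_injOn (by simpa using hA) (by simpa using hB) h)
    (fun σ hσ => ?_)).symm
  · simp only [mem_filter, mem_univ, true_and] at hA ⊢
    exact desNum_eq_one_iff.mpr ⟨_, isOnlyDescentAt_grassmannian hA⟩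
  · obtain ⟨d, hd⟩ := desNum_eq_one_iff.mp (by simpa using hσ)
    exact ⟨_, by simpa using hd.not_isLowerSet, hd.eq_grassmannian.symm⟩

/-- The transposition of positions `j` and `j + 1`; the identity when `n ≤ j + 1`. -/
def adjSwap (j : ℕ) : Perm (Fin n) :=
  if h : j + 1 < n then swap ⟨j, by omega⟩ ⟨j + 1, h⟩ else 1

lemma adjSwap_apply_val {j : ℕ} (h : j + 1 < n) (k : Fin n) :
    (adjSwap j k : ℕ) = if (k : ℕ) = j then j + 1 else if (k : ℕ) = j + 1 then j else k := by
  rw [adjSwap, dif_pos h, swap_apply_def]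
  split_ifs <;> simp_all [Fin.ext_iff]

lemma tau132_apply_val {p : ℕ} (hp : 2 < p) (a : Fin p) :
    (tau132 p hp a : ℕ) = if (a : ℕ) = 1 then 2 else if (a : ℕ) = 2 then 1 else (a : ℕ) := by
  rw [tau132, swap_apply_def]
  split_ifs <;> simp_all [Fin.ext_iff]

lemma adjSwap_injOn : Set.InjOn (adjSwap (n := n)) {j | j + 1 < n} := by
  intro a ha b hb h
  have := congrArg (fun σ : Perm (Fin n) => (σ ⟨a, by simp at ha; omega⟩ : ℕ)) h
  simp only [adjSwap_apply_val ha, adjSwap_apply_val hb] at this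
  split_ifs at this <;> omega

lemma isOnlyDescentAt_adjSwap {j : ℕ} (h : j + 1 < n) : IsOnlyDescentAt (adjSwap (n := n) j) j := by
  refine ⟨h, fun i k hik => ?_⟩
  rw [Fin.lt_def, adjSwap_apply_val h, adjSwap_apply_val h]
  split_ifs <;> omega

lemma hasMatch_adjSwap {p j : ℕ} (hp : 2 < p) (hj : 1 ≤ j) (hjp : j + p ≤ n + 1) :
    HasMatch (tau132 p hp) (adjSwap (n := n) j) := by
  refine ⟨j - 1, by omega, fun a b => ?_⟩
  simp only [Fin.lt_def, adjSwap_apply_val (show j + 1 < n by omega), tau132_apply_val]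
  split_ifs <;> omega

lemma IsOnlyDescentAt.eq_adjSwap {σ : Perm (Fin n)} {i : ℕ} (h : IsOnlyDescentAt σ (i + 1))
    (hi : i + 3 < n) (hl : σ ⟨i, by omega⟩ < σ ⟨i + 2, by omega⟩)
    (hr : σ ⟨i + 1, by omega⟩ < σ ⟨i + 3, hi⟩) : σ = adjSwap (i + 1) := by
  have hmono : StrictMono (σ * adjSwap (n := n) (i + 1)) := by
    refine strictMono_of_lt_of_val_eq_succ fun ⟨k, hk⟩ ⟨l, hl⟩ hkl => ?_
    obtain rfl : l = k + 1 := hkl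
    have hs : ∀ m (hm : m < n), adjSwap (i + 1) (⟨m, hm⟩ : Fin n) =
        ⟨if m = i + 1 then i + 2 else if m = i + 2 then i + 1 else m, by split_ifs <;> omega⟩ :=
      fun m hm => Fin.ext (adjSwap_apply_val (by omega) _)
    rw [Perm.mul_apply, Perm.mul_apply, hs, hs]
    rcases (by omega : k = i ∨ k = i + 1 ∨ k = i + 2 ∨ (k ≠ i ∧ k ≠ i + 1 ∧ k ≠ i + 2))
      with rfl | rfl | rfl | ⟨h0, h1, h2⟩
    · simpa using hl
    · simpa using (h.2 ⟨i + 1, by omega⟩ ⟨i + 2, by omega⟩ rfl).mpr rfl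
    · simpa using hr
    · simp only [h1, h2, if_false, show k + 1 ≠ i + 1 by omega, show k + 1 ≠ i + 2 by omega]
      exact h.apply_lt_apply rfl h1
  have := (Perm.monotone_iff _).mp hmono.monotone
  rw [mul_eq_one_iff_eq_inv] at this
  rw [this, adjSwap, dif_pos (by omega), swap_inv]

lemma exists_eq_adjSwap_of_hasMatch {p : ℕ} (hp : 4 ≤ p) {σ : Perm (Fin n)}
    (hσ : desNum σ = 1) (hm : HasMatch (tau132 p (by omega)) σ) :
    ∃ j, 1 ≤ j ∧ j + p ≤ n + 1 ∧ σ = adjSwap j := by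
  obtain ⟨i, hin, hwin⟩ := hm
  have hτ : ∀ a b (ha : a < p) (hb : b < p), (tau132 p (by omega) ⟨a, ha⟩ : ℕ) <
      tau132 p (by omega) ⟨b, hb⟩ → σ ⟨i + a, by omega⟩ < σ ⟨i + b, by omega⟩ :=
    fun a b ha hb hab => (hwin ⟨a, ha⟩ ⟨b, hb⟩).mpr (Fin.lt_def.mpr hab)
  have hdes := hτ 2 1 (by omega) (by omega) (by simp [tau132_apply_val])
  have hl := hτ 0 2 (by omega) (by omega) (by simp [tau132_apply_val])
  have hr := hτ 1 3 (by omega) (by omega) (by simp [tau132_apply_val])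
  obtain ⟨d, hd⟩ := desNum_eq_one_iff.mp hσ
  obtain rfl : i + 1 = d := (hd.2 ⟨i + 1, by omega⟩ ⟨i + 2, by omega⟩ rfl).mp hdes
  exact ⟨i + 1, by omega, by omega, hd.eq_adjSwap (by omega) hl hr⟩

lemma card_desNum_eq_one_and_hasMatch {p : ℕ} (hp : 4 ≤ p) (hn : p - 1 ≤ n) :
    #{σ : Perm (Fin n) | desNum σ = 1 ∧ HasMatch (tau132 p (by omega)) σ} + p = n + 1 := by
  have hset : ({σ : Perm (Fin n) | desNum σ = 1 ∧ HasMatch (tau132 p (by omega)) σ} : Finset _) =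
      (Icc 1 (n + 1 - p)).image adjSwap := by
    ext σ
    simp only [mem_filter, mem_univ, true_and, mem_image, mem_Icc]
    constructor
    · rintro ⟨hσ, hm⟩
      obtain ⟨j, hj, hjp, rfl⟩ := exists_eq_adjSwap_of_hasMatch hp hσ hm
      exact ⟨j, ⟨hj, by omega⟩, rfl⟩
    · rintro ⟨j, ⟨hj, hjp⟩, rfl⟩
      exact ⟨desNum_eq_one_iff.mpr ⟨j, isOnlyDescentAt_adjSwap (by omega)⟩,
        hasMatch_adjSwap _ hj (by omega)⟩
  rw [hset, card_image_of_injOn (adjSwap_injOn.mono fun j hj => by simp at hj ⊢; omega),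
    Nat.card_Icc]
  omega

end

/-- For `p ≥ 4` and `n ≥ p - 1`, the number of permutations of `S_n` with
no `1324⋯p`-match and exactly one descent equals `2^n - 2n + p - 2`. -/
theorem count_nomatch_one_descent (p : ℕ) (hp : 4 ≤ p) (n : ℕ) (hn : p - 1 ≤ n) :
    (Nat.card {σ : Equiv.Perm (Fin n) //
        ¬ HasMatch (tau132 p (by omega)) σ ∧ desNum σ = 1} : ℤ)
    = 2 ^ n - 2 * n + p - 2 := by
  have hsplit := card_filter_add_card_filter_not (s := {σ : Perm (Fin n) | desNum σ = 1})
    (p := HasMatch (tau132 p (by omega)))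
  simp only [filter_filter] at hsplit
  have hmatch := card_desNum_eq_one_and_hasMatch hp hn
  have hall := card_desNum_eq_one (n := n)
  rw [Nat.card_eq_fintype_card, Fintype.card_subtype]
  have h2n : ((2 ^ n : ℕ) : ℤ) = 2 ^ n := by push_cast; rfl
  rw [← h2n]
  simp only [and_comm] at hsplit ⊢
  omega
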